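/- arXiv:1110.1674 — 2 statements merged into one kernel-verified Lean document; each statement's English description precedes it below -/
import Mathlib

section
/- For a formal power series G(z) = (1+z²u_2+...+z^n u_n)^{m/n} over ℚ[u_2,...,u_n] with coefficients w_k, the quotient rings ℚ[u_2,...,u_n]/J_{m/n} and ℚ[v_2,...,v_m]/J_{n/m} are isomorphic as graded rings, where J_{m/n} is generated by {w_k : k > m}, J_{n/m} is generated by the coefficients of z^k for k > n in (1+z²v_2+...+z^m v_m)^{n/m}, and the grading assigns degree i to u_i and v_i. -/
/-! Write `U = z²u₂ + ⋯ + zⁿuₙ` and `V = z²v₂ + ⋯ + zᵐvₘ`. Binomial series compose as expected: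
`((1 + U)^{m/n})^{n/m} = 1 + U`, because both sides have constant term `1` and the same `m`-th power
`(1 + U)^m`, and such `m`-th roots are unique over a `ℚ`-algebra. Modulo `J`, the series
`(1 + U)^{m/n}` is the polynomial `1 + z²w₂ + ⋯ + zᵐwₘ`, the image of `1 + V` under `φ : v_j ↦ w_j`.
Hence `φ((1 + V)^{n/m}) = 1 + U` modulo `J`: `φ` kills the generators of `J'` and sends `w'ᵢ`
to `uᵢ`. Exchanging `m` and `n` gives `ψ : uᵢ ↦ w'ᵢ` with the symmetric properties, so `φ` and
`ψ` induce mutually inverse isomorphisms of the quotients. -/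

open PowerSeries

/-- Generalized binomial coefficient `C(α, j) = α(α-1)⋯(α-j+1)/j!`. -/
noncomputable def gbinom (α : ℚ) (j : ℕ) : ℚ :=
  (∏ i ∈ Finset.range j, (α - i)) / (j.factorial : ℚ)

/-- The binomial series `(1 + w)^α = ∑_j C(α,j) w^j`, for a power series `w`
(intended to have zero constant term, so that each coefficient is a finite sum). -/
noncomputable def fpow {R : Type*} [CommRing R] [Algebra ℚ R]
    (w : PowerSeries R) (α : ℚ) : PowerSeries R :=
  PowerSeries.mk fun k => ∑ j ∈ Finset.range (k + 1),
    gbinom α j • (PowerSeries.coeff (R := R) k (w ^ j))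

lemma gbinom_eq_ringChoose (α : ℚ) (j : ℕ) : gbinom α j = Ring.choose α j := by
  rw [Ring.choose_eq_smul, ← Polynomial.aeval_eq_smeval, Polynomial.aeval_def,
    ← Polynomial.eval_map, descPochhammer_map, descPochhammer_eval_eq_prod_range, gbinom,
    smul_eq_mul, div_eq_inv_mul]

namespace PowerSeries

variable {R : Type*} [CommRing R]

lemma coeff_pow_eq_zero_of_lt {u : R⟦X⟧} (hu : constantCoeff u = 0) {j k : ℕ} (h : k < j) :
    coeff k (u ^ j) = 0 :=
  coeff_of_lt_order k ((Nat.cast_lt.mpr h).trans_le (le_order_pow_of_constantCoeff_eq_zero j hu))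

lemma eq_of_pow_eq_pow_of_constantCoeff_eq_one [Algebra ℚ R] {f g : R⟦X⟧} {N : ℕ} (hN : N ≠ 0)
    (hf : constantCoeff f = 1) (hg : constantCoeff g = 1) (h : f ^ N = g ^ N) : f = g := by
  have hunit : IsUnit (∑ i ∈ Finset.range N, f ^ i * g ^ (N - 1 - i)) := by
    rw [isUnit_iff_constantCoeff, map_sum]
    simpa [hf, hg] using (isUnit_iff_ne_zero.mpr (Nat.cast_ne_zero.mpr hN)).map (algebraMap ℚ R)
  rw [← sub_eq_zero, ← hunit.mul_right_eq_zero, geom_sum₂_mul, h, sub_self]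

section ShiftedSeries

variable {N : ℕ}

noncomputable def shiftedSeries (a : Fin N → R) : R⟦X⟧ :=
  ∑ i, C (a i) * X ^ ((i : ℕ) + 2)

lemma coeff_add_two_shiftedSeries (a : Fin N → R) (i : Fin N) :
    coeff (i + 2) (shiftedSeries a) = a i := by
  rw [shiftedSeries, map_sum, Finset.sum_eq_single i]
  · simp
  · intro j _ hji
    rw [coeff_C_mul_X_pow, if_neg (by omega)]
  · simp

lemma coeff_shiftedSeries_eq_zero (a : Fin N → R) {k : ℕ} (hk : k < 2 ∨ N + 2 ≤ k) :
    coeff k (shiftedSeries a) = 0 := by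
  refine (map_sum _ _ _).trans (Finset.sum_eq_zero fun i _ => ?_)
  rw [coeff_C_mul_X_pow, if_neg (by omega)]

lemma map_shiftedSeries {S : Type*} [CommRing S] (f : R →+* S) (a : Fin N → R) :
    map f (shiftedSeries a) = shiftedSeries (f ∘ a) := by
  simp [shiftedSeries]

lemma map_eq_shiftedSeries {S : Type*} [CommRing S] (π : R →+* S) {P : R⟦X⟧}
    (hP : ∀ k, k < 2 ∨ N + 2 ≤ k → π (coeff k P) = 0) :
    map π P = shiftedSeries fun i : Fin N => π (coeff (i + 2) P) := by
  ext k
  rw [coeff_map]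
  by_cases hk : k < 2 ∨ N + 2 ≤ k
  · rw [hP k hk, coeff_shiftedSeries_eq_zero _ hk]
  · obtain ⟨i, rfl⟩ : ∃ i : Fin N, k = i + 2 := ⟨⟨k - 2, by omega⟩, by simp; omega⟩
    rw [coeff_add_two_shiftedSeries]

end ShiftedSeries

end PowerSeries

section BinomialSeries

variable {R : Type*} [CommRing R] [Algebra ℚ R]

lemma fpow_eq_subst {u : R⟦X⟧} (hu : constantCoeff u = 0) (α : ℚ) :
    fpow u α = (binomialSeries R α).subst u := by
  ext k
  rw [coeff_subst' (HasSubst.of_constantCoeff_zero' hu), finsum_eq_sum_of_support_subset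
    (s := Finset.range (k + 1)), fpow, coeff_mk]
  · simp only [binomialSeries_coeff, smul_one_smul, gbinom_eq_ringChoose]
  · intro j hj
    by_contra! hkj
    simp only [Finset.coe_range, Set.mem_Iio, not_lt] at hkj
    exact hj (by dsimp only; rw [coeff_pow_eq_zero_of_lt hu hkj, smul_zero])

lemma constantCoeff_fpow (u : R⟦X⟧) (α : ℚ) : constantCoeff (fpow u α) = 1 := by
  rw [← coeff_zero_eq_constantCoeff_apply, fpow, coeff_mk]
  simp [gbinom]

lemma coeff_one_fpow (u : R⟦X⟧) (α : ℚ) : coeff 1 (fpow u α) = α • coeff 1 u := by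
  simp [fpow, gbinom, Finset.sum_range_succ]

lemma fpow_add {u : R⟦X⟧} (hu : constantCoeff u = 0) (α β : ℚ) :
    fpow u (α + β) = fpow u α * fpow u β := by
  simp only [fpow_eq_subst hu, binomialSeries_add, subst_mul (HasSubst.of_constantCoeff_zero' hu)]

lemma fpow_natCast {u : R⟦X⟧} (hu : constantCoeff u = 0) (N : ℕ) :
    fpow u N = (1 + u) ^ N := by
  have hsubst := HasSubst.of_constantCoeff_zero' hu
  rw [fpow_eq_subst hu, binomialSeries_nat, subst_pow hsubst, subst_add hsubst, subst_X hsubst,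
    ← coe_substAlgHom hsubst, map_one]

lemma fpow_pow {u : R⟦X⟧} (hu : constantCoeff u = 0) (α : ℚ) (N : ℕ) :
    fpow u α ^ N = fpow u (N * α) := by
  induction N with
  | zero => simpa using (fpow_natCast hu 0).symm
  | succ N ih => rw [pow_succ, ih, ← fpow_add hu]; push_cast; ring_nf

lemma map_fpow {S : Type*} [CommRing S] [Algebra ℚ S] (f : R →ₐ[ℚ] S) (u : R⟦X⟧) (α : ℚ) :
    map (f : R →+* S) (fpow u α) = fpow (map (f : R →+* S) u) α := by
  ext k
  simp [fpow, ← map_pow, map_smul]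

theorem fpow_fpow_sub_one {u : R⟦X⟧} (hu : constantCoeff u = 0) {m n : ℕ} (hm : m ≠ 0)
    (hn : n ≠ 0) : fpow (fpow u (m / n) - 1) (n / m) = 1 + u := by
  set W := fpow u (m / n) - 1
  have hW : constantCoeff W = 0 := by simp [W, constantCoeff_fpow]
  refine eq_of_pow_eq_pow_of_constantCoeff_eq_one hm (constantCoeff_fpow _ _) (by simp [hu]) ?_
  calc fpow W (n / m) ^ m = fpow W n := by rw [fpow_pow hW]; congr 1; field_simp
    _ = fpow u (m / n) ^ n := by rw [fpow_natCast hW, add_sub_cancel]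
    _ = (1 + u) ^ m := by rw [fpow_pow hu, ← fpow_natCast hu]; congr 1; field_simp

/-- If the image of `(1 + V)^{n/m}` is a polynomial of degree `≤ n`, that polynomial is
`1 + z²a₀ + ⋯ + zⁿa_{n-2}`, and raising it to the power `m/n` recovers the image of `1 + V`. -/
theorem map_one_add_eq_fpow_shiftedSeries {S : Type*} [CommRing S] [Algebra ℚ S] {V : R⟦X⟧}
    (hV : ∀ k < 2, coeff k V = 0) (π : R →ₐ[ℚ] S) {m n : ℕ} (hm : m ≠ 0) (hn : n ≠ 0)
    (hπ : ∀ k, n < k → π (coeff k (fpow V (n / m))) = 0) :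
    map (π : R →+* S) (1 + V) =
      fpow (shiftedSeries fun i : Fin (n - 1) => π (coeff (i + 2) (fpow V (n / m)))) (m / n) := by
  have hW : map (π : R →+* S) (fpow V (n / m) - 1) =
      shiftedSeries fun i : Fin (n - 1) => π (coeff (i + 2) (fpow V (n / m))) := by
    rw [map_eq_shiftedSeries (N := n - 1)]
    · simp [coeff_one]
    · rintro k (hk | hk)
      · interval_cases k <;> simp [coeff_one_fpow, constantCoeff_fpow, hV 1]
      · simpa [coeff_one, show k ≠ 0 by omega] using hπ k (by omega)
  rw [← hW, ← map_fpow, fpow_fpow_sub_one (by simpa using hV 0 two_pos) hn hm]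

end BinomialSeries

theorem MvPolynomial.exists_algEquiv_quotient {R σ τ : Type*} [CommRing R]
    {I : Ideal (MvPolynomial σ R)} {I' : Ideal (MvPolynomial τ R)}
    {a : σ → MvPolynomial τ R} {b : τ → MvPolynomial σ R}
    (ha : I ≤ I'.comap (MvPolynomial.aeval a)) (hb : I' ≤ I.comap (MvPolynomial.aeval b))
    (hba : ∀ i, MvPolynomial.aeval b (a i) - MvPolynomial.X i ∈ I)
    (hab : ∀ j, MvPolynomial.aeval a (b j) - MvPolynomial.X j ∈ I') :
    ∃ e : (MvPolynomial σ R ⧸ I) ≃ₐ[R] (MvPolynomial τ R ⧸ I'),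
      ∀ i, e (Ideal.Quotient.mk I (MvPolynomial.X i)) = Ideal.Quotient.mk I' (a i) := by
  refine ⟨AlgEquiv.ofAlgHom (Ideal.quotientMapₐ I' (MvPolynomial.aeval a) ha)
    (Ideal.quotientMapₐ I (MvPolynomial.aeval b) hb) ?_ ?_, fun i => ?_⟩
  · refine Ideal.Quotient.algHom_ext _ (MvPolynomial.algHom_ext fun j => ?_)
    simpa [Ideal.Quotient.eq] using hab j
  · refine Ideal.Quotient.algHom_ext _ (MvPolynomial.algHom_ext fun i => ?_)
    simpa [Ideal.Quotient.eq] using hba i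
  · simp

def tailIdeal {R : Type*} [CommRing R] (P : R⟦X⟧) (n : ℕ) : Ideal R :=
  Ideal.span {g | ∃ k, n < k ∧ g = coeff k P}

lemma coeff_mem_tailIdeal {R : Type*} [CommRing R] (P : R⟦X⟧) {n k : ℕ} (hk : n < k) :
    coeff k P ∈ tailIdeal P n :=
  Ideal.subset_span ⟨k, hk, rfl⟩

noncomputable abbrev genericSeries (N : ℕ) : (MvPolynomial (Fin N) ℚ)⟦X⟧ :=
  shiftedSeries MvPolynomial.X

section GenericSeries

variable {m n : ℕ}

theorem aeval_coeff_fpow_genericSeries_sub_mem (hm : m ≠ 0) (hn : n ≠ 0) (k : ℕ) :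
    MvPolynomial.aeval (fun i : Fin (n - 1) => coeff (i + 2) (fpow (genericSeries (m - 1)) (n / m)))
        (coeff k (fpow (genericSeries (n - 1)) (m / n))) - coeff k (1 + genericSeries (m - 1)) ∈
      tailIdeal (fpow (genericSeries (m - 1)) (n / m)) n := by
  set J := tailIdeal (fpow (genericSeries (m - 1)) (n / m)) n
  set b := fun i : Fin (n - 1) => coeff (i + 2) (fpow (genericSeries (m - 1)) (n / m))
  have key := map_one_add_eq_fpow_shiftedSeries
    (fun k hk => coeff_shiftedSeries_eq_zero _ (.inl hk)) (Ideal.Quotient.mkₐ ℚ J) hm hn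
    fun k hk => Ideal.Quotient.eq_zero_iff_mem.mpr (coeff_mem_tailIdeal _ hk)
  have hsubst : (shiftedSeries fun i => Ideal.Quotient.mkₐ ℚ J (b i)) =
      map ((Ideal.Quotient.mkₐ ℚ J).comp (MvPolynomial.aeval b) : _ →+* _)
        (genericSeries (n - 1)) := by
    rw [map_shiftedSeries]
    congr 1
    ext i
    simp
  rw [hsubst, ← map_fpow] at key
  rw [← Ideal.Quotient.eq]
  simpa using (congrArg (coeff k) key).symm

theorem tailIdeal_le_comap_aeval (hm : m ≠ 0) (hn : n ≠ 0) :
    tailIdeal (fpow (genericSeries (n - 1)) (m / n)) m ≤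
      (tailIdeal (fpow (genericSeries (m - 1)) (n / m)) n).comap (MvPolynomial.aeval
        fun i : Fin (n - 1) => coeff (i + 2) (fpow (genericSeries (m - 1)) (n / m))) := by
  rw [tailIdeal, Ideal.span_le]
  rintro _ ⟨k, hk, rfl⟩
  simpa [coeff_one, show k ≠ 0 by omega,
    coeff_shiftedSeries_eq_zero _ (.inr (by omega : m - 1 + 2 ≤ k))]
    using aeval_coeff_fpow_genericSeries_sub_mem hm hn k

theorem aeval_coeff_fpow_genericSeries_sub_X_mem (hm : m ≠ 0) (hn : n ≠ 0) (j : Fin (m - 1)) :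
    MvPolynomial.aeval (fun i : Fin (n - 1) => coeff (i + 2) (fpow (genericSeries (m - 1)) (n / m)))
        (coeff (j + 2) (fpow (genericSeries (n - 1)) (m / n))) - MvPolynomial.X j ∈
      tailIdeal (fpow (genericSeries (m - 1)) (n / m)) n := by
  simpa [coeff_one, coeff_add_two_shiftedSeries] using
    aeval_coeff_fpow_genericSeries_sub_mem hm hn (j + 2)

end GenericSeries

/-- Since each `w_j` is weighted-homogeneous of degree `j` (with `deg uᵢ = deg vᵢ = i`),
this isomorphism is graded.  `X i : ℚ[Fin (n-1)]` stands for `u_{i+2}` and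
`X j : ℚ[Fin (m-1)]` for `v_{j+2}`. -/
theorem quotients_isomorphic_general (m n : ℕ) (hm : 0 < m) (hn : 0 < n)
    (w : ℕ → MvPolynomial (Fin (n - 1)) ℚ)
    (hw : ∀ k, w k = PowerSeries.coeff k (fpow
      (∑ i : Fin (n - 1),
        PowerSeries.C (R := MvPolynomial (Fin (n - 1)) ℚ) (MvPolynomial.X i) *
          PowerSeries.X ^ ((i : ℕ) + 2)) ((m : ℚ) / n)))
    (w' : ℕ → MvPolynomial (Fin (m - 1)) ℚ)
    (hw' : ∀ k, w' k = PowerSeries.coeff k (fpow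
      (∑ j : Fin (m - 1),
        PowerSeries.C (R := MvPolynomial (Fin (m - 1)) ℚ) (MvPolynomial.X j) *
          PowerSeries.X ^ ((j : ℕ) + 2)) ((n : ℚ) / m)))
    (J : Ideal (MvPolynomial (Fin (n - 1)) ℚ)) (hJ : J = Ideal.span {g | ∃ k, m < k ∧ g = w k})
    (J' : Ideal (MvPolynomial (Fin (m - 1)) ℚ))
    (hJ' : J' = Ideal.span {g | ∃ k, n < k ∧ g = w' k}) :
    ∃ e : (MvPolynomial (Fin (m - 1)) ℚ ⧸ J') ≃+* (MvPolynomial (Fin (n - 1)) ℚ ⧸ J),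
      ∀ j : Fin (m - 1),
        e (Ideal.Quotient.mk J' (MvPolynomial.X j)) = Ideal.Quotient.mk J (w ((j : ℕ) + 2)) := by
  obtain rfl : w = fun k => coeff k (fpow (genericSeries (n - 1)) (m / n)) := funext hw
  obtain rfl : w' = fun k => coeff k (fpow (genericSeries (m - 1)) (n / m)) := funext hw'
  subst hJ hJ'
  obtain ⟨e, he⟩ := MvPolynomial.exists_algEquiv_quotient
    (tailIdeal_le_comap_aeval hn.ne' hm.ne') (tailIdeal_le_comap_aeval hm.ne' hn.ne')
    (aeval_coeff_fpow_genericSeries_sub_X_mem hm.ne' hn.ne')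
    (aeval_coeff_fpow_genericSeries_sub_X_mem hn.ne' hm.ne')
  exact ⟨e.toRingEquiv, he⟩

/-- `ℚ[u₂,…,uₙ]/J_{m/n} ≅ ℚ[v₂,…,v_m]/J_{n/m}`, the isomorphism sending (the class of)
`v_j` to (the class of) `w_j`, the `z^j`-coefficient of `(1+z²u₂+⋯+zⁿuₙ)^{m/n}`.
Since each `w_j` is weighted-homogeneous of degree `j` (with `deg uᵢ = deg vᵢ = i`),
this isomorphism is graded.  `X i : ℚ[Fin (n-1)]` stands for `u_{i+2}` and
`X j : ℚ[Fin (m-1)]` for `v_{j+2}`. -/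
theorem quotients_isomorphic (m n : ℕ) (hm : 0 < m) (hn : 0 < n) (hmn : Nat.Coprime m n)
    (w : ℕ → MvPolynomial (Fin (n - 1)) ℚ)
    (hw : ∀ k, w k = PowerSeries.coeff k (fpow
      (∑ i : Fin (n - 1),
        PowerSeries.C (R := MvPolynomial (Fin (n - 1)) ℚ) (MvPolynomial.X i) *
          PowerSeries.X ^ ((i : ℕ) + 2)) ((m : ℚ) / n)))
    (w' : ℕ → MvPolynomial (Fin (m - 1)) ℚ)
    (hw' : ∀ k, w' k = PowerSeries.coeff k (fpow
      (∑ j : Fin (m - 1),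
        PowerSeries.C (R := MvPolynomial (Fin (m - 1)) ℚ) (MvPolynomial.X j) *
          PowerSeries.X ^ ((j : ℕ) + 2)) ((n : ℚ) / m)))
    (J : Ideal (MvPolynomial (Fin (n - 1)) ℚ)) (hJ : J = Ideal.span {g | ∃ k, m < k ∧ g = w k})
    (J' : Ideal (MvPolynomial (Fin (m - 1)) ℚ))
    (hJ' : J' = Ideal.span {g | ∃ k, n < k ∧ g = w' k}) :
    ∃ e : (MvPolynomial (Fin (m - 1)) ℚ ⧸ J') ≃+* (MvPolynomial (Fin (n - 1)) ℚ ⧸ J),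
      ∀ j : Fin (m - 1),
        e (Ideal.Quotient.mk J' (MvPolynomial.X j)) = Ideal.Quotient.mk J (w ((j : ℕ) + 2)) :=
  quotients_isomorphic_general m n hm hn w hw w' hw' J hJ J' hJ'
end

section
/- With f_i = Coef_m[B_i(z)] as above, for each 1 ≤ k ≤ n-1 the symmetric polynomial ∑_{i=1}^n x_i^k f_i equals -(n/m)(m+k)·v_{m+k} - ∑_{j=1}^{k-1} v_{m+j}·p_{k-j}, where p_r are power sums and v_r = Coef_r[∏_i (1-z x_i)^{m/n}]. Consequently v_{m+1},...,v_{m+n-1} lie in the ideal generated by f_1,...,f_n. -/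
/-! With `F = ∏ᵢ (1 - xᵢ z)^α`, `α = m/n`, logarithmic differentiation gives
`F' = -α (∑_r p_{r+1} z^r) F`, i.e. the Newton-type recursion `N v_N = -α ∑_{j<N} v_j p_{N-j}`.
Since `f_i = ∑_{j ≤ m} x_i^{m-j} v_j`, the sum `∑ᵢ xᵢᵏ fᵢ = ∑_{j ≤ m} v_j p_{m+k-j}` is the
right-hand side of the recursion at `N = m + k` with its last `k - 1` terms removed. In these
identities `v_{m+k}` appears with the nonzero coefficient `-(n/m)(m+k)`, so the system is
triangular and induction on `k` puts each `v_{m+k}` in the ideal `(f₁, …, fₙ)`. -/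

open PowerSeries

lemma succ_mul_gbinom_succ (α : ℚ) (k : ℕ) :
    ((k : ℚ) + 1) * gbinom α (k + 1) = (α - k) * gbinom α k := by
  have hk : (k.factorial : ℚ) ≠ 0 := Nat.cast_ne_zero.mpr k.factorial_ne_zero
  rw [gbinom, gbinom, Finset.prod_range_succ, Nat.factorial_succ]
  push_cast
  field_simp

section

variable {R : Type*} [CommRing R]

lemma one_sub_C_mul_X_mul_mk_pow (x : R) : (1 - C x * X) * mk (x ^ ·) = 1 := by
  ext (_ | k)
  · simp
  · rw [sub_mul, one_mul, map_sub, mul_assoc, coeff_C_mul, coeff_succ_X_mul, coeff_mk, coeff_mk,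
      pow_succ', sub_self, coeff_one, if_neg k.succ_ne_zero]

lemma invOfUnit_one_sub_C_mul_X (x : R) : invOfUnit (1 - C x * X) 1 = mk (x ^ ·) :=
  left_inv_eq_right_inv (invOfUnit_mul _ _ (by simp)) (one_sub_C_mul_X_mul_mk_pow x)

lemma Derivation.map_prod_of_map_eq_mul {A : Type*} [CommRing A] [Algebra R A] {ι : Type*}
    (D : Derivation R A A) (s : Finset ι) (g a : ι → A) (h : ∀ i ∈ s, D (g i) = a i * g i) :
    D (∏ i ∈ s, g i) = (∑ i ∈ s, a i) * ∏ i ∈ s, g i := by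
  classical
  induction s using Finset.induction_on with
  | empty => simp
  | insert j s hj ih =>
    rw [Finset.prod_insert hj, Finset.sum_insert hj, D.leibniz, smul_eq_mul, smul_eq_mul,
      ih fun i hi => h i (Finset.mem_insert_of_mem hi), h j (Finset.mem_insert_self j s)]
    ring

variable {ι : Type*} [Fintype ι]

lemma coeff_invOfUnit_one_sub_C_mul_X_mul (y : R) (G : R⟦X⟧) (m : ℕ) :
    coeff m (invOfUnit (1 - C y * X) 1 * G) =
      ∑ j ∈ Finset.range (m + 1), coeff j G * y ^ (m - j) := by
  rw [invOfUnit_one_sub_C_mul_X, mul_comm, coeff_mul,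
    Finset.Nat.sum_antidiagonal_eq_sum_range_succ_mk]
  simp only [coeff_mk]

lemma sum_pow_mul_coeff_invOfUnit_mul (x : ι → R) (G : R⟦X⟧) (m k : ℕ) :
    ∑ i, x i ^ k * coeff m (invOfUnit (1 - C (x i) * X) 1 * G) =
      ∑ j ∈ Finset.range (m + 1), coeff j G * ∑ i, x i ^ (m + k - j) := by
  simp only [coeff_invOfUnit_one_sub_C_mul_X_mul, Finset.mul_sum]
  rw [Finset.sum_comm]
  refine Finset.sum_congr rfl fun j hj => Finset.sum_congr rfl fun i _ => ?_
  rw [Nat.sub_add_comm (Finset.mem_range_succ_iff.mp hj), pow_add]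
  ring

variable [Algebra ℚ R]

lemma coeff_fpow_neg_C_mul_X (x : R) (α : ℚ) (k : ℕ) :
    coeff k (fpow (-(C x * X)) α) = gbinom α k • (-x) ^ k := by
  have hpow : ∀ j, coeff k ((-(C x * X)) ^ j) = if k = j then (-x) ^ k else 0 := by
    intro j
    rw [← neg_mul, ← map_neg, mul_pow, ← map_pow, coeff_C_mul_X_pow]
    split_ifs with h <;> simp [h]
  simp only [fpow, coeff_mk, hpow, smul_ite, smul_zero, Finset.sum_ite_eq, Finset.mem_range,
    Nat.lt_succ_self, if_true]

lemma one_sub_C_mul_X_mul_derivative_fpow (x : R) (α : ℚ) :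
    (1 - C x * X) * d⁄dX R (fpow (-(C x * X)) α) = (-α) • (C x * fpow (-(C x * X)) α) := by
  ext (_ | k)
  · rw [sub_mul, one_mul, map_sub, coeff_smul, mul_assoc, coeff_C_mul, coeff_C_mul,
      coeff_zero_X_mul, mul_zero, sub_zero, coeff_derivative, coeff_fpow_neg_C_mul_X,
      coeff_fpow_neg_C_mul_X]
    simp [gbinom, Algebra.smul_def]
  · have hrec := congrArg (algebraMap ℚ R) (succ_mul_gbinom_succ α (k + 1))
    simp only [map_mul, map_sub, map_add, map_natCast, map_one] at hrec
    rw [sub_mul, one_mul, map_sub, coeff_smul, mul_assoc, coeff_C_mul, coeff_C_mul,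
      coeff_succ_X_mul, coeff_derivative, coeff_derivative]
    simp only [coeff_fpow_neg_C_mul_X, Algebra.smul_def, map_neg]
    push_cast at hrec ⊢
    linear_combination (-x) ^ (k + 2) * hrec

lemma derivative_fpow (x : R) (α : ℚ) :
    d⁄dX R (fpow (-(C x * X)) α) = ((-α) • (C x * mk (x ^ ·))) * fpow (-(C x * X)) α := by
  calc d⁄dX R (fpow (-(C x * X)) α)
      = mk (x ^ ·) * ((1 - C x * X) * d⁄dX R (fpow (-(C x * X)) α)) := by
        rw [← mul_assoc, mul_comm (mk _), one_sub_C_mul_X_mul_mk_pow, one_mul]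
    _ = _ := by
        rw [one_sub_C_mul_X_mul_derivative_fpow, mul_smul_comm, smul_mul_assoc]
        ring_nf

noncomputable def binomProd (x : ι → R) (α : ℚ) : R⟦X⟧ :=
  ∏ i, fpow (-(C (x i) * X)) α

lemma derivative_binomProd (x : ι → R) (α : ℚ) :
    d⁄dX R (binomProd x α) = (-α) • (mk (fun r => ∑ i, x i ^ (r + 1)) * binomProd x α) := by
  rw [binomProd, Derivation.map_prod_of_map_eq_mul _ _ _ _ fun i _ => derivative_fpow (x i) α,
    ← Finset.smul_sum, smul_mul_assoc]
  congr 2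
  ext r
  simp only [map_sum, coeff_C_mul, coeff_mk, pow_succ']

lemma natCast_smul_coeff_binomProd (x : ι → R) (α : ℚ) (N : ℕ) :
    (N : ℚ) • coeff N (binomProd x α) =
      (-α) • ∑ j ∈ Finset.range N, coeff j (binomProd x α) * ∑ i, x i ^ (N - j) := by
  cases N with
  | zero => simp
  | succ r =>
    have h := congrArg (coeff r) (derivative_binomProd x α)
    rw [coeff_derivative, coeff_smul, mul_comm (mk _), coeff_mul,
      Finset.Nat.sum_antidiagonal_eq_sum_range_succ_mk] at h
    rw [Nat.cast_smul_eq_nsmul, nsmul_eq_mul, mul_comm, Nat.cast_succ, h]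
    refine congrArg _ (Finset.sum_congr rfl fun j hj => ?_)
    rw [coeff_mk, Nat.sub_add_comm (Finset.mem_range_succ_iff.mp hj)]

lemma sum_range_succ_mul_eq_of_recursion {v p : ℕ → R} {α : ℚ} (hα : α ≠ 0)
    (hrec : ∀ N : ℕ, (N : ℚ) • v N = (-α) • ∑ j ∈ Finset.range N, v j * p (N - j))
    {m k : ℕ} (hk : 1 ≤ k) :
    ∑ j ∈ Finset.range (m + 1), v j * p (m + k - j) =
      -((α⁻¹ * (m + k)) • v (m + k)) - ∑ j ∈ Finset.Icc 1 (k - 1), v (m + j) * p (k - j) := by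
  have htotal :
      ∑ j ∈ Finset.range (m + k), v j * p (m + k - j) = -((α⁻¹ * (m + k)) • v (m + k)) := by
    have h := congrArg (fun y => (-α)⁻¹ • y) (hrec (m + k))
    simp only [smul_smul, inv_mul_cancel₀ (neg_ne_zero.mpr hα), one_smul] at h
    rw [← h, inv_neg, neg_mul, neg_smul, Nat.cast_add]
  obtain ⟨k, rfl⟩ : ∃ k', k = k' + 1 := ⟨k - 1, by omega⟩
  rw [eq_sub_iff_add_eq, ← htotal, show m + (k + 1) = m + 1 + k by ring,
    Finset.sum_range_add _ (m + 1) k, Nat.add_sub_cancel, ← Finset.Ico_add_one_right_eq_Icc,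
    Finset.sum_Ico_eq_sum_range]
  congr 1
  refine Finset.sum_congr rfl fun j _ => ?_
  congr 2 <;> omega

lemma mem_of_smul_add_sum_mem {I : Ideal R} {w q : ℕ → R} {c : ℕ → ℚ} {N : ℕ}
    (hc : ∀ k, c k ≠ 0)
    (h : ∀ k, 1 ≤ k → k ≤ N → c k • w k + ∑ j ∈ Finset.Icc 1 (k - 1), w j * q (k - j) ∈ I) :
    ∀ k, 1 ≤ k → k ≤ N → w k ∈ I := by
  intro k
  induction k using Nat.strong_induction_on with
  | _ k ih =>
    intro hk1 hkN
    have htail : ∑ j ∈ Finset.Icc 1 (k - 1), w j * q (k - j) ∈ I :=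
      I.sum_mem fun j hj => by
        rw [Finset.mem_Icc] at hj
        exact I.mul_mem_right _ (ih j (by omega) hj.1 (by omega))
    have hsmul : c k • w k ∈ I := by
      simpa only [add_sub_cancel_right] using I.sub_mem (h k hk1 hkN) htail
    rw [Algebra.smul_def] at hsmul
    simpa only [← mul_assoc, ← map_mul, inv_mul_cancel₀ (hc k), map_one, one_mul] using
      I.mul_mem_left (algebraMap ℚ R (c k)⁻¹) hsmul

end

theorem sum_pow_f_eq_general (m n : ℕ) (hm : 0 < m) (hn : 0 < n)
    (F : PowerSeries (MvPolynomial (Fin n) ℂ))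
    (hF : F = ∏ j : Fin n,
      fpow (-(PowerSeries.C (R := MvPolynomial (Fin n) ℂ) (MvPolynomial.X j) * PowerSeries.X))
        ((m : ℚ) / n))
    (v : ℕ → MvPolynomial (Fin n) ℂ) (hv : ∀ k, v k = PowerSeries.coeff k F)
    (p : ℕ → MvPolynomial (Fin n) ℂ) (hp : ∀ j, p j = ∑ i : Fin n, MvPolynomial.X i ^ j)
    (B : Fin n → PowerSeries (MvPolynomial (Fin n) ℂ))
    (hB : ∀ i, B i = PowerSeries.invOfUnit
      (1 - PowerSeries.C (R := MvPolynomial (Fin n) ℂ) (MvPolynomial.X i) * PowerSeries.X) 1 * F)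
    (f : Fin n → MvPolynomial (Fin n) ℂ) (hf : ∀ i, f i = PowerSeries.coeff m (B i)) :
    (∀ k : ℕ, 1 ≤ k → k ≤ n - 1 →
      ∑ i : Fin n, MvPolynomial.X i ^ k * f i =
        -((((n : ℚ) / m) * (m + k)) • v (m + k)) -
          ∑ j ∈ Finset.Icc 1 (k - 1), v (m + j) * p (k - j)) ∧
    (∀ j : ℕ, 1 ≤ j → j ≤ n - 1 → v (m + j) ∈ Ideal.span {g | ∃ i, g = f i}) := by
  have hα : (m : ℚ) / n ≠ 0 := by positivity
  have hrec (N : ℕ) :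
      (N : ℚ) • v N = (-((m : ℚ) / n)) • ∑ j ∈ Finset.range N, v j * p (N - j) := by
    simpa only [hv, hp, hF, binomProd] using
      natCast_smul_coeff_binomProd MvPolynomial.X ((m : ℚ) / n) N
  have hsum (k : ℕ) (hk : 1 ≤ k) : ∑ i : Fin n, MvPolynomial.X i ^ k * f i =
      -((((n : ℚ) / m) * (m + k)) • v (m + k)) -
        ∑ j ∈ Finset.Icc 1 (k - 1), v (m + j) * p (k - j) := by
    simp only [hf, hB, sum_pow_mul_coeff_invOfUnit_mul, ← hv, ← hp]
    rw [sum_range_succ_mul_eq_of_recursion hα hrec hk, inv_div]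
  refine ⟨fun k hk _ => hsum k hk, mem_of_smul_add_sum_mem (q := p)
    (c := fun k => (n : ℚ) / m * (m + k)) (fun k => by positivity) fun k hk _ => ?_⟩
  have hneg : ((n : ℚ) / m * (m + k)) • v (m + k) +
      ∑ j ∈ Finset.Icc 1 (k - 1), v (m + j) * p (k - j) =
        -∑ i : Fin n, MvPolynomial.X i ^ k * f i := by
    rw [hsum k hk]
    abel
  rw [hneg]
  exact neg_mem (Ideal.sum_mem _ fun i _ => Ideal.mul_mem_left _ _ (Ideal.subset_span ⟨i, rfl⟩))

/-- For `1 ≤ k ≤ n-1`: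
`∑ i, x_iᵏ f_i = -(n/m)(m+k) v_{m+k} - ∑_{j=1}^{k-1} v_{m+j} p_{k-j}`,
and consequently `v_{m+1}, …, v_{m+n-1}` lie in the ideal `(f₁,…,fₙ)`. -/
theorem sum_pow_f_eq (m n : ℕ) (hm : 0 < m) (hn : 0 < n) (hmn : Nat.Coprime m n)
    (F : PowerSeries (MvPolynomial (Fin n) ℂ))
    (hF : F = ∏ j : Fin n,
      fpow (-(PowerSeries.C (R := MvPolynomial (Fin n) ℂ) (MvPolynomial.X j) * PowerSeries.X))
        ((m : ℚ) / n))
    (v : ℕ → MvPolynomial (Fin n) ℂ) (hv : ∀ k, v k = PowerSeries.coeff k F)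
    (p : ℕ → MvPolynomial (Fin n) ℂ) (hp : ∀ j, p j = ∑ i : Fin n, MvPolynomial.X i ^ j)
    (B : Fin n → PowerSeries (MvPolynomial (Fin n) ℂ))
    (hB : ∀ i, B i = PowerSeries.invOfUnit
      (1 - PowerSeries.C (R := MvPolynomial (Fin n) ℂ) (MvPolynomial.X i) * PowerSeries.X) 1 * F)
    (f : Fin n → MvPolynomial (Fin n) ℂ) (hf : ∀ i, f i = PowerSeries.coeff m (B i)) :
    (∀ k : ℕ, 1 ≤ k → k ≤ n - 1 →
      ∑ i : Fin n, MvPolynomial.X i ^ k * f i =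
        -((((n : ℚ) / m) * (m + k)) • v (m + k)) -
          ∑ j ∈ Finset.Icc 1 (k - 1), v (m + j) * p (k - j)) ∧
    (∀ j : ℕ, 1 ≤ j → j ≤ n - 1 → v (m + j) ∈ Ideal.span {g | ∃ i, g = f i}) :=
  sum_pow_f_eq_general m n hm hn F hF v hv p hp B hB f hf
end
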